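/- Let $(M,\omega)$ be a premultisymplectic manifold with $\omega$ a closed $(n+1)$-form. For each point $p\in M$, the map $c_p : \Lambda^{n+1}\mathfrak{X}_{\mathrm{LHam}}(M) \to \mathbb{R}$ defined by $c_p(v_1\wedge\cdots\wedge v_{n+1}) = (-1)^n \varsigma(n+1)\, \iota(v_1\wedge\cdots\wedge v_{n+1})\omega|_p$ is a degree $(n+1)$ cocycle in the Chevalley-Eilenberg complex of the Lie algebra of local Hamiltonian vector fields. -/

import Mathlib

open scoped BigOperators

/-- An abstract model of the Cartan calculus of differential forms on a manifold-like
object `M`: `X` plays the role of the Lie algebra of vector fields, `Ω` of the (total)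
space of differential forms, `grade k` of the space of `k`-forms, `d` of the de Rham
differential, `ι v` of contraction with the vector field `v`, `ev p` of evaluation of a
`0`-form (function) at the point `p`, and `const` of the constant functions.  The axioms
are the standard identities of the Cartan calculus. -/
structure CartanCalculus (M X Ω : Type*) [LieRing X] [LieAlgebra ℝ X]
    [AddCommGroup Ω] [Module ℝ Ω] where
  grade : ℤ → Submodule ℝ Ω
  grade_neg : ∀ k : ℤ, k < 0 → grade k = ⊥
  d : Ω →ₗ[ℝ] Ω
  ι : X →ₗ[ℝ] Ω →ₗ[ℝ] Ω
  ev : M → Ω →ₗ[ℝ] ℝ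
  const : ℝ →ₗ[ℝ] Ω
  const_grade : ∀ r, const r ∈ grade 0
  d_const : ∀ r, d (const r) = 0
  ι_const : ∀ v r, ι v (const r) = 0
  d_grade : ∀ (k : ℤ) (α : Ω), α ∈ grade k → d α ∈ grade (k + 1)
  ι_grade : ∀ (v : X) (k : ℤ) (α : Ω), α ∈ grade k → ι v α ∈ grade (k - 1)
  d_d : ∀ α, d (d α) = 0
  ι_ι : ∀ v w α, ι v (ι w α) = - ι w (ι v α)
  ι_bracket : ∀ v w α,
    ι ⁅v, w⁆ α =
      d (ι v (ι w α)) + ι v (d (ι w α)) - ι w (d (ι v α)) - ι w (ι v (d α))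

namespace CartanCalculus

variable {M X Ω : Type*} [LieRing X] [LieAlgebra ℝ X] [AddCommGroup Ω] [Module ℝ Ω]

/-- The Lie derivative `L_v = d ∘ ι_v + ι_v ∘ d` (Cartan's magic formula). -/
def lie (C : CartanCalculus M X Ω) (v : X) : Ω →ₗ[ℝ] Ω :=
  C.d ∘ₗ C.ι v + C.ι v ∘ₗ C.d

/-- Iterated contraction `ι(v₁ ∧ ⋯ ∧ v_k) α = ι_{v_k} ⋯ ι_{v₁} α`. -/
def contr (C : CartanCalculus M X Ω) : (k : ℕ) → (Fin k → X) → Ω → Ω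
  | 0, _, α => α
  | k + 1, v, α => contr C k (fun a => v a.succ) (C.ι (v 0) α)

end CartanCalculus

/-- The sign `ς(k) = -(-1)^{k(k+1)/2}` from the paper. -/
def sigmaSign (k : ℕ) : ℝ := -(-1 : ℝ) ^ (k * (k + 1) / 2)

/-- Remove the `i`-th entry of a tuple. -/
def rmNth {α : Type*} {n : ℕ} (i : Fin (n + 1)) (x : Fin (n + 1) → α) : Fin n → α :=
  fun a => x (i.succAbove a)

/-- Remove the entries in positions `i < j` of a tuple. -/
def rm2 {α : Type*} {m : ℕ} (x : Fin (m + 2) → α) (i j : Fin (m + 2)) : Fin m → α :=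
  rmNth ⟨(j : ℕ) - 1, by have := j.isLt; omega⟩ (rmNth i x)

----------------------------------------------------------------
-- auxiliary lemmas
----------------------------------------------------------------

namespace CartanCalculus

variable {M X Ω : Type*} [LieRing X] [LieAlgebra ℝ X] [AddCommGroup Ω] [Module ℝ Ω]
variable (C : CartanCalculus M X Ω)

lemma contr_succ (m : ℕ) (w : Fin (m+1) → X) (α : Ω) :
    C.contr (m+1) w α = C.contr m (Fin.tail w) (C.ι (w 0) α) := rfl

lemma contr_cons (m : ℕ) (x : X) (u : Fin m → X) (α : Ω) :
    C.contr (m+1) (Fin.cons x u) α = C.contr m u (C.ι x α) := by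
  rw [contr_succ]
  simp [Fin.tail_cons]

lemma contr_add (m : ℕ) (w : Fin m → X) (α β : Ω) :
    C.contr m w (α + β) = C.contr m w α + C.contr m w β := by
  induction m generalizing α β with
  | zero => rfl
  | succ m ih => rw [contr_succ, contr_succ, contr_succ, map_add, ih]

lemma contr_zero (m : ℕ) (w : Fin m → X) : C.contr m w 0 = 0 := by
  induction m with
  | zero => rfl
  | succ m ih => rw [contr_succ, map_zero, ih]

lemma contr_neg (m : ℕ) (w : Fin m → X) (α : Ω) :
    C.contr m w (-α) = - C.contr m w α := by
  induction m generalizing α with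
  | zero => rfl
  | succ m ih => rw [contr_succ, contr_succ, map_neg, ih]

lemma contr_sub (m : ℕ) (w : Fin m → X) (α β : Ω) :
    C.contr m w (α - β) = C.contr m w α - C.contr m w β := by
  rw [sub_eq_add_neg, contr_add, contr_neg, sub_eq_add_neg]

lemma lie_iota (v w : X) (α : Ω) :
    C.lie v (C.ι w α) = C.ι ⁅v, w⁆ α + C.ι w (C.lie v α) := by
  simp only [lie, LinearMap.add_apply, LinearMap.comp_apply, C.ι_bracket, map_add]
  abel

lemma iota_d (v : X) (α : Ω) :
    C.ι v (C.d α) = C.lie v α - C.d (C.ι v α) := by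
  simp only [lie, LinearMap.add_apply, LinearMap.comp_apply]
  abel

lemma contr_grade (m : ℕ) (w : Fin m → X) (g : ℤ) (α : Ω) (h : α ∈ C.grade g) :
    C.contr m w α ∈ C.grade (g - m) := by
  induction m generalizing g α with
  | zero => simpa [contr] using h
  | succ m ih =>
    rw [contr_succ]
    have := ih (Fin.tail w) (g - 1) _ (C.ι_grade (w 0) g α h)
    convert this using 2
    push_cast
    ring

lemma contr_eq_zero_of_grade_neg (m : ℕ) (w : Fin m → X) (g : ℤ) (α : Ω)
    (h : α ∈ C.grade g) (hg : g - m < 0) : C.contr m w α = 0 := by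
  have := C.contr_grade m w g α h
  rw [C.grade_neg _ hg] at this
  simpa using this

lemma lie_contr (m : ℕ) (v : X) (w : Fin m → X) (α : Ω) :
    C.lie v (C.contr m w α) =
      (∑ t : Fin m, C.contr m (Function.update w t ⁅v, w t⁆) α)
        + C.contr m w (C.lie v α) := by
  induction m generalizing α with
  | zero => simp [contr]
  | succ m ih =>
    rw [contr_succ, ih, lie_iota, contr_add, Fin.sum_univ_succ]
    have h0 : C.contr m (Fin.tail w) (C.ι ⁅v, w 0⁆ α)
        = C.contr (m+1) (Function.update w 0 ⁅v, w 0⁆) α := by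
      rw [contr_succ, Fin.tail_update_zero, Function.update_self]
    have hsucc : ∀ t : Fin m,
        C.contr m (Function.update (Fin.tail w) t ⁅v, Fin.tail w t⁆) (C.ι (w 0) α)
          = C.contr (m+1) (Function.update w t.succ ⁅v, w t.succ⁆) α := by
      intro t
      rw [contr_succ, Fin.tail_update_succ, Function.update_of_ne (Fin.succ_ne_zero t).symm]
      simp [Fin.tail]
    rw [h0]
    rw [Finset.sum_congr rfl (fun t _ => (hsucc t))]
    rw [contr_succ C m w (C.lie v α)]
    abel

end CartanCalculus

section FinLemmas

variable {α : Type*}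

lemma coe_succAbove {n : ℕ} (p : Fin (n+1)) (i : Fin n) :
    ((p.succAbove i : Fin (n+1)) : ℕ) = if (i : ℕ) < (p : ℕ) then (i : ℕ) else (i : ℕ) + 1 := by
  rw [Fin.succAbove]
  split_ifs with h1 h2 h2
  · rfl
  · exact absurd (by simpa [Fin.lt_def] using h1) h2
  · exact absurd (by simpa [Fin.lt_def] using h2) h1
  · rfl

lemma rmNth_zero {n : ℕ} (w : Fin (n+1) → α) : rmNth 0 w = Fin.tail w := by
  funext a
  simp [rmNth, Fin.tail, Fin.succAbove_zero]

lemma rmNth_succ {n : ℕ} (i : Fin (n+1)) (w : Fin (n+2) → α) :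
    rmNth i.succ w = Fin.cons (w 0) (rmNth i (Fin.tail w)) := by
  funext a
  refine Fin.cases ?_ ?_ a
  · simp [rmNth, Fin.succ_succAbove_zero]
  · intro b
    simp [rmNth, Fin.succ_succAbove_succ, Fin.tail]

-- P1 : updating at the removed position is invisible
lemma rmNth_update_self {n : ℕ} (i : Fin (n+1)) (w : Fin (n+1) → α) (x : α) :
    rmNth i (Function.update w i x) = rmNth i w := by
  funext a
  simp only [rmNth]
  rw [Function.update_of_ne (Fin.succAbove_ne i a)]

-- P3 : updating elsewhere commutes with removal
lemma rmNth_update_succAbove {n : ℕ} (i : Fin (n+1)) (s : Fin n) (w : Fin (n+1) → α) (x : α) :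
    rmNth i (Function.update w (i.succAbove s) x) = Function.update (rmNth i w) s x := by
  funext a
  simp only [rmNth, Function.update]
  by_cases h : a = s
  · subst h; simp
  · have h2 : ¬ (i.succAbove a = i.succAbove s) := fun hh => h (Fin.succAbove_right_injective hh)
    simp [h, h2]

-- P2 : for t < i, position t survives removal of i at the "same" index
lemma succAbove_castOfLt {n : ℕ} (i t : Fin (n+1)) (h : t < i) :
    i.succAbove ⟨(t : ℕ), by omega⟩ = t := by
  apply Fin.ext
  rw [coe_succAbove]
  simp only
  rw [if_pos (by exact_mod_cast h)]

-- P5 : removing i then t (t < i) equals rm2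
lemma rmNth_rmNth_eq_rm2 {m : ℕ} (v : Fin (m+2) → α) (t i : Fin (m+2)) (h : t < i) :
    rmNth ⟨(t : ℕ), by have := i.isLt; omega⟩ (rmNth i v) = rm2 v t i := by
  funext a
  simp only [rmNth, rm2]
  congr 1
  apply Fin.ext
  rw [coe_succAbove, coe_succAbove, coe_succAbove, coe_succAbove]
  have hi := i.isLt
  have ha := a.isLt
  have ht : (t:ℕ) < (i:ℕ) := h
  simp only
  split_ifs <;> omega

end FinLemmas

section FinLemmas2
variable {α : Type*}

lemma cons_rmNth_zero {n : ℕ} (u : Fin (n+1) → α) : Fin.cons (u 0) (rmNth 0 u) = u := by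
  funext a
  refine Fin.cases ?_ ?_ a
  · simp
  · intro b
    simp [rmNth_zero, Fin.tail]

lemma update_succ_zero {n : ℕ} (w : Fin (n+2) → α) (t : Fin (n+1)) (x : α) :
    Function.update w t.succ x 0 = w 0 := by
  rw [Function.update_of_ne (Fin.succ_ne_zero t).symm]

lemma if_neg_zero {β : Type*} [SubtractionMonoid β] (c : Prop) [Decidable c] (x : β) :
    (if c then -x else 0) = -(if c then x else 0) := by
  split <;> simp

end FinLemmas2

namespace CartanCalculus

variable {M X Ω : Type*} [LieRing X] [LieAlgebra ℝ X] [AddCommGroup Ω] [Module ℝ Ω]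
variable (C : CartanCalculus M X Ω)

lemma contr_moveFront (m : ℕ) (u : Fin (m+1) → X) (s : Fin (m+1)) (α : Ω) :
    C.contr (m+1) u α
      = ((-1:ℝ)^(s:ℕ)) • C.contr (m+1) (Fin.cons (u s) (rmNth s u)) α := by
  induction m generalizing α with
  | zero =>
    have : s = 0 := Fin.fin_one_eq_zero s
    subst this
    simp [cons_rmNth_zero]
  | succ m ih =>
    refine Fin.cases ?_ ?_ s
    · simp [cons_rmNth_zero]
    · intro s'
      rw [contr_succ, ih (Fin.tail u) s' (C.ι (u 0) α), contr_cons]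
      rw [show Fin.tail u s' = u s'.succ from rfl]
      rw [contr_cons, rmNth_succ, contr_cons]
      rw [C.ι_ι (u s'.succ) (u 0) α, contr_neg]
      rw [Fin.val_succ, pow_succ]
      rw [mul_comm, mul_smul, neg_one_smul]
      rw [smul_neg]

end CartanCalculus

namespace CartanCalculus

variable {M X Ω : Type*} [LieRing X] [LieAlgebra ℝ X] [AddCommGroup Ω] [Module ℝ Ω]
variable (C : CartanCalculus M X Ω)

set_option maxHeartbeats 1000000 in
lemma contr_d (n : ℕ) (w : Fin (n+1) → X) (α : Ω) :
    C.contr (n+1) w (C.d α) =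
      (∑ i : Fin (n+1), ((-1:ℝ)^(i:ℕ)) • C.lie (w i) (C.contr n (rmNth i w) α))
      - (∑ i : Fin (n+1), ∑ t : Fin (n+1), if i < t then
          ((-1:ℝ)^(i:ℕ)) • C.contr n (rmNth i (Function.update w t ⁅w i, w t⁆)) α else 0)
      + ((-1:ℝ)^(n+1)) • C.d (C.contr (n+1) w α) := by
  induction n generalizing α with
  | zero =>
    rw [contr_succ]
    simp [contr, iota_d, Fin.sum_univ_one]
    abel
  | succ n ih =>
    have hC' : C.contr (n+1) (Fin.tail w) (C.lie (w 0) α)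
        = C.lie (w 0) (C.contr (n+1) (Fin.tail w) α)
          - ∑ t : Fin (n+1),
              C.contr (n+1) (Function.update (Fin.tail w) t ⁅w 0, Fin.tail w t⁆) α := by
      rw [C.lie_contr]; abel
    have eL : (∑ i : Fin (n+1+1), ((-1:ℝ)^(i:ℕ)) • C.lie (w i) (C.contr (n+1) (rmNth i w) α))
        = C.lie (w 0) (C.contr (n+1) (Fin.tail w) α)
          - ∑ i : Fin (n+1), ((-1:ℝ)^(i:ℕ)) •
              C.lie (Fin.tail w i) (C.contr n (rmNth i (Fin.tail w)) (C.ι (w 0) α)) := by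
      rw [Fin.sum_univ_succ]
      have h0 : ((-1:ℝ)^(((0:Fin (n+1+1))):ℕ)) • C.lie (w 0) (C.contr (n+1) (rmNth 0 w) α)
          = C.lie (w 0) (C.contr (n+1) (Fin.tail w) α) := by
        simp [rmNth_zero]
      have hs : ∀ i : Fin (n+1),
          ((-1:ℝ)^((i.succ :ℕ))) • C.lie (w i.succ) (C.contr (n+1) (rmNth i.succ w) α)
            = -(((-1:ℝ)^(i:ℕ)) •
                C.lie (Fin.tail w i) (C.contr n (rmNth i (Fin.tail w)) (C.ι (w 0) α))) := by
        intro i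
        rw [rmNth_succ, contr_cons, Fin.val_succ, pow_succ]
        rw [show Fin.tail w i = w i.succ from rfl]
        rw [mul_comm, mul_smul, neg_one_smul]
      rw [h0, Finset.sum_congr rfl (fun i _ => hs i), Finset.sum_neg_distrib]
      abel
    have eD : (∑ i : Fin (n+1+1), ∑ t : Fin (n+1+1), if i < t then
          ((-1:ℝ)^(i:ℕ)) • C.contr (n+1) (rmNth i (Function.update w t ⁅w i, w t⁆)) α else 0)
        = (∑ t : Fin (n+1),
              C.contr (n+1) (Function.update (Fin.tail w) t ⁅w 0, Fin.tail w t⁆) α)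
          - ∑ i : Fin (n+1), ∑ t : Fin (n+1), if i < t then
              ((-1:ℝ)^(i:ℕ)) • C.contr n
                (rmNth i (Function.update (Fin.tail w) t ⁅Fin.tail w i, Fin.tail w t⁆))
                (C.ι (w 0) α) else 0 := by
      rw [Fin.sum_univ_succ]
      have e0 : (∑ t : Fin (n+1+1), if (0 : Fin (n+1+1)) < t then
            ((-1:ℝ)^(((0:Fin (n+1+1))):ℕ)) •
              C.contr (n+1) (rmNth 0 (Function.update w t ⁅w 0, w t⁆)) α else 0)
          = ∑ t : Fin (n+1),
              C.contr (n+1) (Function.update (Fin.tail w) t ⁅w 0, Fin.tail w t⁆) α := by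
        rw [Fin.sum_univ_succ]
        simp only [lt_irrefl, if_false, zero_add, Fin.succ_pos, if_true, Fin.val_zero,
          pow_zero, one_smul, rmNth_zero, Fin.tail_update_succ]
        exact Finset.sum_congr rfl (fun t _ => by rw [show Fin.tail w t = w t.succ from rfl])
      have es : ∀ i : Fin (n+1), (∑ t : Fin (n+1+1), if i.succ < t then
            ((-1:ℝ)^((i.succ : ℕ))) •
              C.contr (n+1) (rmNth i.succ (Function.update w t ⁅w i.succ, w t⁆)) α else 0)
          = -(∑ t : Fin (n+1), if i < t then
              ((-1:ℝ)^(i:ℕ)) • C.contr n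
                (rmNth i (Function.update (Fin.tail w) t ⁅Fin.tail w i, Fin.tail w t⁆))
                (C.ι (w 0) α) else 0) := by
        intro i
        rw [Fin.sum_univ_succ]
        rw [if_neg (Fin.not_lt_zero _)]
        rw [zero_add]
        have hterm : ∀ t : Fin (n+1), (if i.succ < t.succ then
              ((-1:ℝ)^((i.succ : ℕ))) •
                C.contr (n+1) (rmNth i.succ (Function.update w t.succ ⁅w i.succ, w t.succ⁆)) α else 0)
            = -(if i < t then
              ((-1:ℝ)^(i:ℕ)) • C.contr n
                (rmNth i (Function.update (Fin.tail w) t ⁅Fin.tail w i, Fin.tail w t⁆))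
                (C.ι (w 0) α) else 0) := by
          intro t
          rw [rmNth_succ, Fin.tail_update_succ, update_succ_zero, contr_cons]
          rw [Fin.val_succ, pow_succ, mul_comm, mul_smul, neg_one_smul]
          rw [show Fin.tail w i = w i.succ from rfl, show Fin.tail w t = w t.succ from rfl]
          rw [if_neg_zero]
          simp only [Fin.succ_lt_succ_iff]
        rw [Finset.sum_congr rfl (fun t _ => hterm t), Finset.sum_neg_distrib]
      rw [e0, Finset.sum_congr rfl (fun i _ => es i), Finset.sum_neg_distrib]
      abel
    have epow : ((-1:ℝ)^(n+1+1)) • C.d (C.contr (n+1+1) w α)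
        = -(((-1:ℝ)^(n+1)) • C.d (C.contr (n+1) (Fin.tail w) (C.ι (w 0) α))) := by
      rw [contr_succ, pow_succ, mul_comm, mul_smul, neg_one_smul]
    rw [contr_succ, iota_d, contr_sub, ih (Fin.tail w) (C.ι (w 0) α), hC', eL, eD, epow]
    abel

end CartanCalculus

namespace CartanCalculus

variable {M X Ω : Type*} [LieRing X] [LieAlgebra ℝ X] [AddCommGroup Ω] [Module ℝ Ω]
variable (C : CartanCalculus M X Ω)

set_option maxHeartbeats 1000000 in
lemma key_sum (k : ℕ) (ω : Ω) (hω : ω ∈ C.grade ((k : ℤ) + 2)) (hclosed : C.d ω = 0)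
    (v : Fin (k+2+1) → X) (hv : ∀ i, C.lie (v i) ω = 0) :
    ∑ i : Fin (k+2+1), ∑ t : Fin (k+2+1), (if t < i then
      ((-1:ℝ)^(i:ℕ)) • C.contr (k+2) (rmNth i (Function.update v t ⁅v i, v t⁆)) ω else 0)
    = 0 := by
  set A : Fin (k+2+1) → Fin (k+2+1) → Ω := fun i t =>
    C.contr (k+2) (rmNth i (Function.update v t ⁅v i, v t⁆)) ω with hA
  have hzero : C.contr (k+2+1) v ω = 0 := by
    refine C.contr_eq_zero_of_grade_neg _ v ((k:ℤ)+2) ω hω ?_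
    push_cast; omega
  have hD := C.contr_d (k+2) v ω
  rw [hclosed, contr_zero, hzero, map_zero, smul_zero, add_zero] at hD
  have hlie : ∀ i, C.lie (v i) (C.contr (k+2) (rmNth i v) ω)
      = (∑ t : Fin (k+2+1), A i t) - A i i := by
    intro i
    rw [C.lie_contr, hv i, contr_zero, add_zero]
    rw [Fin.sum_univ_succAbove (fun t => A i t) i]
    have hdiag : A i i = C.contr (k+2) (rmNth i v) ω := by
      rw [hA]; simp only; rw [rmNth_update_self]
    have hterm : ∀ s : Fin (k+2),
        C.contr (k+2) (Function.update (rmNth i v) s ⁅v i, rmNth i v s⁆) ω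
          = A i (i.succAbove s) := by
      intro s
      rw [hA]; simp only; rw [rmNth_update_succAbove]; rfl
    rw [hdiag, Finset.sum_congr rfl (fun s _ => hterm s)]
    abel
  rw [Finset.sum_congr rfl (fun i _ => by rw [hlie i])] at hD
  have hsplit : ∀ i : Fin (k+2+1),
      ((-1:ℝ)^(i:ℕ)) • ((∑ t : Fin (k+2+1), A i t) - A i i)
        = (∑ t : Fin (k+2+1), if i < t then ((-1:ℝ)^(i:ℕ)) • A i t else 0)
          + (∑ t : Fin (k+2+1), if t < i then ((-1:ℝ)^(i:ℕ)) • A i t else 0) := by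
    intro i
    rw [smul_sub, Finset.smul_sum]
    have htri : ∀ t : Fin (k+2+1), ((-1:ℝ)^(i:ℕ)) • A i t
        = (if i < t then ((-1:ℝ)^(i:ℕ)) • A i t else 0)
          + (if t < i then ((-1:ℝ)^(i:ℕ)) • A i t else 0)
          + (if t = i then ((-1:ℝ)^(i:ℕ)) • A i t else 0) := by
      intro t
      rcases lt_trichotomy i t with h|h|h
      · simp [h, not_lt_of_gt h, h.ne']
      · simp [h, lt_irrefl]
      · simp [h, not_lt_of_gt h, h.ne]
    rw [Finset.sum_congr rfl (fun t _ => htri t)]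
    rw [Finset.sum_add_distrib, Finset.sum_add_distrib]
    rw [Finset.sum_ite_eq' Finset.univ i (fun t => ((-1:ℝ)^(i:ℕ)) • A i t)]
    simp only [Finset.mem_univ, if_true]
    abel
  rw [Finset.sum_congr rfl (fun i _ => hsplit i), Finset.sum_add_distrib] at hD
  calc (∑ i : Fin (k+2+1), ∑ t : Fin (k+2+1), if t < i then ((-1:ℝ)^(i:ℕ)) • A i t else 0)
      = ((∑ i : Fin (k+2+1), ∑ t : Fin (k+2+1), if i < t then ((-1:ℝ)^(i:ℕ)) • A i t else 0)
          + (∑ i : Fin (k+2+1), ∑ t : Fin (k+2+1), if t < i then ((-1:ℝ)^(i:ℕ)) • A i t else 0))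
        - (∑ i : Fin (k+2+1), ∑ t : Fin (k+2+1), if i < t then ((-1:ℝ)^(i:ℕ)) • A i t else 0) := by
        abel
    _ = 0 := by rw [← hD]

end CartanCalculus

namespace CartanCalculus

variable {M X Ω : Type*} [LieRing X] [LieAlgebra ℝ X] [AddCommGroup Ω] [Module ℝ Ω]
variable (C : CartanCalculus M X Ω)

lemma term_transport (k : ℕ) (ω : Ω) (v : Fin (k+2+1) → X)
    (t i : Fin (k+2+1)) (h : t < i) :
    ((-1:ℝ)^((t:ℕ)+(i:ℕ))) • C.contr (k+2) (Fin.cons ⁅v t, v i⁆ (rm2 v t i)) ω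
      = -(((-1:ℝ)^(i:ℕ)) • C.contr (k+2) (rmNth i (Function.update v t ⁅v i, v t⁆)) ω) := by
  have hti : (t : ℕ) < k + 2 := by
    have h1 : (t:ℕ) < (i:ℕ) := h
    have h2 := i.isLt
    omega
  set s : Fin (k+2) := ⟨(t:ℕ), hti⟩ with hs
  set b : X := ⁅v i, v t⁆ with hb
  have e1 : rmNth i (Function.update v t b) = Function.update (rmNth i v) s b := by
    have h2 := rmNth_update_succAbove i s v b
    rwa [show i.succAbove s = t from succAbove_castOfLt i t h] at h2
  have e2 : C.contr (k+2) (Function.update (rmNth i v) s b) ω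
      = ((-1:ℝ)^((t:ℕ))) •
          C.contr (k+2) (Fin.cons b (rmNth s (rmNth i v))) ω := by
    have h3 := C.contr_moveFront (k+1) (Function.update (rmNth i v) s b) s ω
    rw [Function.update_self, rmNth_update_self] at h3
    exact h3
  have e3 : rmNth s (rmNth i v) = rm2 v t i := by
    have h4 := rmNth_rmNth_eq_rm2 v t i h
    convert h4 using 2
  have e4 : C.contr (k+2) (Fin.cons b (rm2 v t i)) ω
      = - C.contr (k+2) (Fin.cons ⁅v t, v i⁆ (rm2 v t i)) ω := by
    have h5 : b = -⁅v t, v i⁆ := by rw [hb, ← lie_skew]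
    rw [h5]
    show C.contr (k+1+1) _ _ = - C.contr (k+1+1) _ _
    rw [contr_cons, contr_cons, map_neg, LinearMap.neg_apply, contr_neg]
  rw [e1, e2, e3, e4, pow_add]
  module

end CartanCalculus


/-- Let `(M, ω)` be premultisymplectic with ω a closed `(n+1)`-form
(written with `n = k+1`).  For each `p ∈ M` the map
`c_p(v₁,…,v_{n+1}) = (-1)^n ς(n+1) (ι(v₁∧⋯∧v_{n+1}) ω)|_p`
is a degree-`(n+1)` Chevalley–Eilenberg cocycle on the Lie algebra of local Hamiltonian
vector fields, i.e. `δ_CE(c_p) = 0` on local Hamiltonian vector fields. -/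
theorem statement4 {M X Ω : Type*} [LieRing X] [LieAlgebra ℝ X]
    [AddCommGroup Ω] [Module ℝ Ω] (C : CartanCalculus M X Ω)
    (k : ℕ) (ω : Ω) (hω : ω ∈ C.grade ((k : ℤ) + 2)) (hclosed : C.d ω = 0)
    (p : M) (v : Fin (k + 3) → X) (hv : ∀ i, C.lie (v i) ω = 0) :
    ∑ q ∈ Finset.filter (fun q : Fin (k + 3) × Fin (k + 3) => q.1 < q.2) Finset.univ,
      ((-1 : ℝ) ^ ((q.1 : ℕ) + (q.2 : ℕ))) *
        ((-1 : ℝ) ^ (k + 1) * sigmaSign (k + 2) *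
          C.ev p (C.contr (k + 2) (Fin.cons ⁅v q.1, v q.2⁆ (rm2 v q.1 q.2)) ω)) = 0 := by
  have key := C.key_sum k ω hω hclosed v hv
  -- the element-level identity
  have elem : (∑ a : Fin (k+3), ∑ b : Fin (k+3), if a < b then
      ((-1:ℝ)^((a:ℕ)+(b:ℕ))) • C.contr (k+2) (Fin.cons ⁅v a, v b⁆ (rm2 v a b)) ω else 0)
      = 0 := by
    rw [Finset.sum_comm]
    have hterm : ∀ (b a : Fin (k+3)), (if a < b then
        ((-1:ℝ)^((a:ℕ)+(b:ℕ))) • C.contr (k+2) (Fin.cons ⁅v a, v b⁆ (rm2 v a b)) ω else 0)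
        = -(if a < b then
            ((-1:ℝ)^((b:ℕ))) • C.contr (k+2) (rmNth b (Function.update v a ⁅v b, v a⁆)) ω
          else 0) := by
      intro b a
      by_cases h : a < b
      · rw [if_pos h, if_pos h, C.term_transport k ω v a b h]
      · rw [if_neg h, if_neg h, neg_zero]
    rw [Finset.sum_congr rfl (fun b _ => Finset.sum_congr rfl (fun a _ => hterm b a))]
    simp only [Finset.sum_neg_distrib]
    rw [key]
    exact neg_zero
  rw [Finset.sum_filter, Fintype.sum_prod_type]
  have hfact : ∀ (a b : Fin (k+3)), (if a < b then
      ((-1 : ℝ) ^ ((a : ℕ) + (b : ℕ))) *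
        ((-1 : ℝ) ^ (k + 1) * sigmaSign (k + 2) *
          C.ev p (C.contr (k + 2) (Fin.cons ⁅v a, v b⁆ (rm2 v a b)) ω)) else 0)
      = ((-1 : ℝ) ^ (k + 1) * sigmaSign (k + 2)) *
          C.ev p (if a < b then
            ((-1:ℝ)^((a:ℕ)+(b:ℕ))) • C.contr (k+2) (Fin.cons ⁅v a, v b⁆ (rm2 v a b)) ω
          else 0) := by
    intro a b
    by_cases h : a < b
    · rw [if_pos h, if_pos h, map_smul, smul_eq_mul]
      ring
    · rw [if_neg h, if_neg h, map_zero, mul_zero]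
  rw [Finset.sum_congr rfl (fun a _ => Finset.sum_congr rfl (fun b _ => hfact a b))]
  simp only [← Finset.mul_sum, ← map_sum]
  rw [elem, map_zero, mul_zero]
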